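/- arXiv:2309.14128 — 2 statements merged into one kernel-verified Lean document; each statement's English description precedes it below -/
import Mathlib

section
/- Let A = {H₁,…,Hₙ} be a toric hyperplane arrangement on Tⁿ consisting of exactly n hyperplanes Hᵢ = θ_{aᵢ}⁻¹(bᵢ), and let Θ be the n × n integer matrix whose i-th row is aᵢ; assume det Θ ≠ 0. Then the complement Tⁿ \ (H₁ ∪ ⋯ ∪ Hₙ) has exactly |det Θ| connected components. -/
open Set

/-- The `n`-torus `ℝⁿ/ℤⁿ`, modelled as a product of circles `ℝ/ℤ`. -/
abbrev Torus (n : ℕ) := Fin n → AddCircle (1 : ℝ)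

/-- The group homomorphism `Tⁿ → ℝ/ℤ` induced by `x ↦ a₁x₁ + ⋯ + aₙxₙ`. -/
noncomputable def theta {n : ℕ} (a : Fin n → ℤ) (x : Torus n) : AddCircle (1 : ℝ) :=
  ∑ i, a i • x i

/-- The affine toric hyperplane with normal vector `a` and intercept `c`. -/
def Hyp {n : ℕ} (a : Fin n → ℤ) (c : AddCircle (1 : ℝ)) : Set (Torus n) :=
  {x | theta a x = c}

/-- The set of connected components of a subset `A` of a topological space. -/
def comps {X : Type*} [TopologicalSpace X] (A : Set X) : Set (Set X) :=
  {C | ∃ x ∈ A, C = connectedComponentIn A x}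

/-!
Lift the intercepts `b` to `β ∈ ℝⁿ`. A point `x ∈ ℝⁿ` projects into the complement of the
arrangement iff no coordinate of `Θx - β` is an integer, i.e. iff `Θx - β` lies in one of the open
unit cubes `m + (0,1)ⁿ`, `m ∈ ℤⁿ`. The images in `Tⁿ` of these open parallelepipeds are open,
connected and nonempty (`Θ` is invertible over `ℝ`) and cover the complement. Translating `x` by
`k ∈ ℤⁿ` translates `Θx` by `Θk`, so two of them meet only if their indices differ by an element of
`Θℤⁿ`, and then they coincide. Hence the components are indexed by `ℤⁿ ⧸ Θℤⁿ`, a group of order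
`|det Θ|` by the Smith normal form.
-/

theorem Matrix.card_quotient_range_toLin' {ι : Type*} [Fintype ι] [DecidableEq ι]
    (A : Matrix ι ι ℤ) (hA : A.det ≠ 0) :
    Nat.card ((ι → ℤ) ⧸ LinearMap.range A.toLin') = A.det.natAbs := by
  rw [← Submodule.natAbs_det_equiv _
    (LinearEquiv.ofInjective _ (mulVec_injective_of_det_ne_zero hA)), ← LinearMap.det_toLin' A]
  rfl

section Components

variable {X ι : Type*} [TopologicalSpace X] {S : Set X} {R : ι → Set X}

theorem connectedComponentIn_eq_of_isOpen_cover (hopen : ∀ i, IsOpen (R i))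
    (hconn : ∀ i, IsPreconnected (R i)) (hcover : ⋃ i, R i = S)
    (hdisj : ∀ i j, (R i ∩ R j).Nonempty → R i = R j) {i : ι} {y : X} (hy : y ∈ R i) :
    connectedComponentIn S y = R i := by
  have hRS : R i ⊆ S := hcover ▸ subset_iUnion R i
  refine subset_antisymm ?_ ((hconn i).subset_connectedComponentIn hy hRS)
  refine isPreconnected_connectedComponentIn.subset_left_of_subset_union (hopen i)
    (isOpen_biUnion fun j _ => hopen j) (v := ⋃ j ∈ {j | R j ≠ R i}, R j) ?_ ?_
    ⟨y, mem_connectedComponentIn (hRS hy), hy⟩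
  · refine disjoint_left.2 fun z hzi hz => ?_
    obtain ⟨j, hj, hzj⟩ := mem_iUnion₂.1 hz
    exact hj (hdisj j i ⟨z, hzj, hzi⟩)
  · intro z hz
    obtain ⟨j, hzj⟩ := mem_iUnion.1 (hcover ▸ connectedComponentIn_subset S y hz)
    by_cases hji : R j = R i
    · exact Or.inl (hji ▸ hzj)
    · exact Or.inr (mem_biUnion hji hzj)

theorem comps_eq_range_of_isOpen_cover (hopen : ∀ i, IsOpen (R i))
    (hconn : ∀ i, IsPreconnected (R i)) (hne : ∀ i, (R i).Nonempty) (hcover : ⋃ i, R i = S)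
    (hdisj : ∀ i j, (R i ∩ R j).Nonempty → R i = R j) :
    comps S = range R := by
  ext C
  constructor
  · rintro ⟨y, hy, rfl⟩
    obtain ⟨i, hi⟩ := mem_iUnion.1 (hcover ▸ hy)
    exact ⟨i, (connectedComponentIn_eq_of_isOpen_cover hopen hconn hcover hdisj hi).symm⟩
  · rintro ⟨i, rfl⟩
    obtain ⟨y, hy⟩ := hne i
    exact ⟨y, hcover ▸ mem_iUnion_of_mem i hy,
      (connectedComponentIn_eq_of_isOpen_cover hopen hconn hcover hdisj hy).symm⟩

end Components

section UnitCube

variable {ι : Type*}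

def unitCube (m : ι → ℤ) : Set (ι → ℝ) :=
  univ.pi fun i => Ioo (m i : ℝ) (m i + 1)

theorem eq_of_mem_unitCube {y : ι → ℝ} {m m' : ι → ℤ} (h : y ∈ unitCube m)
    (h' : y ∈ unitCube m') : m = m' := by
  have floor_eq {m : ι → ℤ} (h : y ∈ unitCube m) (i : ι) : ⌊y i⌋ = m i :=
    Int.floor_eq_iff.2 ⟨(h i trivial).1.le, (h i trivial).2⟩
  funext i
  rw [← floor_eq h, ← floor_eq h']

theorem exists_mem_unitCube_iff {y : ι → ℝ} :
    (∃ m, y ∈ unitCube m) ↔ ∀ i (k : ℤ), y i ≠ k := by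
  constructor
  · rintro ⟨m, hm⟩ i k hk
    obtain ⟨h1, h2⟩ := hm i trivial
    rw [hk] at h1 h2
    have : m i < k := by exact_mod_cast h1
    have : k < m i + 1 := by exact_mod_cast h2
    omega
  · intro h
    refine ⟨fun i => ⌊y i⌋, fun i _ => ⟨?_, Int.lt_floor_add_one _⟩⟩
    exact (Int.floor_le _).lt_of_ne (h i _).symm

theorem add_intCast_mem_unitCube_iff {y : ι → ℝ} {m k : ι → ℤ} :
    y + Int.cast ∘ k ∈ unitCube (m + k) ↔ y ∈ unitCube m := by
  simp only [unitCube, mem_univ_pi, mem_Ioo, Pi.add_apply, Function.comp_apply, Int.cast_add]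
  refine forall_congr' fun i => ?_
  constructor <;> rintro ⟨h1, h2⟩ <;> constructor <;> linarith

end UnitCube

theorem AddCircle.coe_eq_coe_iff_exists_intCast_sub {x y : ℝ} :
    (x : AddCircle (1 : ℝ)) = y ↔ ∃ k : ℤ, x - y = k := by
  rw [← sub_eq_zero, ← AddCircle.coe_sub, AddCircle.coe_eq_zero_iff]
  simp only [zsmul_eq_mul, mul_one, eq_comm]

namespace Torus

open Matrix

variable {n : ℕ}

def mk (x : Fin n → ℝ) : Torus n := fun i => x i

theorem continuous_mk : Continuous (mk (n := n)) :=
  continuous_pi fun i => (AddCircle.continuous_mk' 1).comp (continuous_apply i)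

theorem isOpenMap_mk : IsOpenMap (mk (n := n)) :=
  IsOpenMap.piMap (fun _ => QuotientAddGroup.isOpenMap_coe)
    (.of_forall fun _ => QuotientAddGroup.mk_surjective)

theorem mk_surjective : Function.Surjective (mk (n := n)) :=
  Function.Surjective.piMap fun _ => QuotientAddGroup.mk_surjective

theorem mk_add_intCast (x : Fin n → ℝ) (k : Fin n → ℤ) : mk (x + Int.cast ∘ k) = mk x :=
  funext fun i => AddCircle.coe_eq_coe_iff_exists_intCast_sub.2 ⟨k i, by simp⟩

theorem exists_eq_add_intCast_of_mk_eq {x x' : Fin n → ℝ} (h : mk x = mk x') :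
    ∃ k : Fin n → ℤ, x' = x + Int.cast ∘ k := by
  choose k hk using fun i => AddCircle.coe_eq_coe_iff_exists_intCast_sub.1 (congrFun h i).symm
  exact ⟨k, funext fun i => by simp [← hk i]⟩

theorem theta_mk (a : Fin n → ℤ) (x : Fin n → ℝ) :
    theta a (mk x) = ((Int.cast ∘ a ⬝ᵥ x : ℝ) : AddCircle (1 : ℝ)) := by
  simp only [theta, mk, dotProduct, Function.comp_apply, ← AddCircle.coe_zsmul, zsmul_eq_mul]
  exact (map_sum (QuotientAddGroup.mk' (AddSubgroup.zmultiples (1 : ℝ))) _ _).symm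

def cell (A : Matrix (Fin n) (Fin n) ℤ) (β : Fin n → ℝ) (m : Fin n → ℤ) : Set (Torus n) :=
  mk '' {x | A.map Int.cast *ᵥ x - β ∈ unitCube m}

variable {A : Matrix (Fin n) (Fin n) ℤ} (β : Fin n → ℝ)

theorem isOpen_cell (m : Fin n → ℤ) : IsOpen (cell A β m) :=
  isOpenMap_mk _ <| (isOpen_set_pi finite_univ fun _ _ => isOpen_Ioo : IsOpen (unitCube m)).preimage
    ((continuous_const.matrix_mulVec continuous_id).sub continuous_const)

theorem isPreconnected_cell (m : Fin n → ℤ) : IsPreconnected (cell A β m) := by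
  refine .image (s := {x | A.map Int.cast *ᵥ x - β ∈ unitCube m}) ?_ _ continuous_mk.continuousOn
  exact ((convex_pi fun _ _ => convex_Ioo _ _).affine_preimage
    ((Matrix.toLin' (A.map Int.cast)).toAffineMap - AffineMap.const ℝ _ β)).isPreconnected

theorem cell_nonempty (hA : A.det ≠ 0) (m : Fin n → ℤ) : (cell A β m).Nonempty := by
  have hL : IsUnit (A.map (Int.cast : ℤ → ℝ)) := by
    rw [Matrix.isUnit_iff_isUnit_det, isUnit_iff_ne_zero,
      show (A.map (Int.cast : ℤ → ℝ)).det = A.det from (RingHom.map_det (Int.castRingHom ℝ) A).symm]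
    exact_mod_cast hA
  obtain ⟨x, hx⟩ := Matrix.mulVec_surjective_iff_isUnit.2 hL (β + fun i => (m i : ℝ) + 1 / 2)
  refine ⟨mk x, x, fun i _ => ?_, rfl⟩
  simp only [hx, Pi.sub_apply, Pi.add_apply, add_sub_cancel_left, mem_Ioo]
  constructor <;> linarith

theorem mulVec_add_intCast (x : Fin n → ℝ) (k : Fin n → ℤ) :
    A.map Int.cast *ᵥ (x + Int.cast ∘ k) = A.map Int.cast *ᵥ x + Int.cast ∘ (A *ᵥ k) := by
  rw [Matrix.mulVec_add]
  congr 1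
  funext i
  exact (RingHom.map_mulVec (Int.castRingHom ℝ) A k i).symm

theorem cell_subset_cell_add_mulVec (m k : Fin n → ℤ) : cell A β m ⊆ cell A β (m + A *ᵥ k) := by
  rintro _ ⟨x, hx, rfl⟩
  refine ⟨x + Int.cast ∘ k, ?_, mk_add_intCast x k⟩
  rw [mem_ofPred_eq, mulVec_add_intCast, add_sub_right_comm]
  exact add_intCast_mem_unitCube_iff.2 hx

theorem cell_add_mulVec (m k : Fin n → ℤ) : cell A β (m + A *ᵥ k) = cell A β m := by
  refine subset_antisymm ?_ (cell_subset_cell_add_mulVec β m k)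
  simpa [Matrix.mulVec_neg] using cell_subset_cell_add_mulVec (A := A) β (m + A *ᵥ k) (-k)

theorem exists_eq_add_mulVec_of_cell_inter_nonempty {m m' : Fin n → ℤ}
    (h : (cell A β m ∩ cell A β m').Nonempty) : ∃ k, m' = m + A *ᵥ k := by
  obtain ⟨_, ⟨x, hx, rfl⟩, x', hx', hxx'⟩ := h
  obtain ⟨k, rfl⟩ := exists_eq_add_intCast_of_mk_eq hxx'.symm
  refine ⟨k, eq_of_mem_unitCube hx' ?_⟩
  rw [mulVec_add_intCast, add_sub_right_comm]
  exact add_intCast_mem_unitCube_iff.2 hx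

theorem cell_eq_of_inter_nonempty {m m' : Fin n → ℤ} (h : (cell A β m ∩ cell A β m').Nonempty) :
    cell A β m = cell A β m' := by
  obtain ⟨k, rfl⟩ := exists_eq_add_mulVec_of_cell_inter_nonempty β h
  exact (cell_add_mulVec β m k).symm

theorem iUnion_cell : ⋃ m, cell A β m = univ \ ⋃ i, Hyp (A i) (mk β i) := by
  have hpre : mk ⁻¹' (univ \ ⋃ i, Hyp (A i) (mk β i)) =
      ⋃ m, {x | A.map Int.cast *ᵥ x - β ∈ unitCube m} := by
    ext x
    simp only [mem_preimage, mem_sdiff, mem_univ, true_and, mem_iUnion, not_exists, Hyp,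
      mem_ofPred_eq, theta_mk, exists_mem_unitCube_iff]
    refine forall_congr' fun i => ?_
    rw [show mk β i = β i from rfl, AddCircle.coe_eq_coe_iff_exists_intCast_sub, not_exists]
    rfl
  simp only [cell]
  rw [← image_iUnion, ← hpre, image_preimage_eq _ mk_surjective]

theorem cell_eq_cell_iff (hA : A.det ≠ 0) {m m' : Fin n → ℤ} :
    cell A β m = cell A β m' ↔ m' - m ∈ LinearMap.range A.toLin' := by
  constructor
  · intro h
    have hm : (cell A β m ∩ cell A β m').Nonempty := by
      rw [h, inter_self]
      exact cell_nonempty β hA m'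
    obtain ⟨k, rfl⟩ := exists_eq_add_mulVec_of_cell_inter_nonempty β hm
    exact ⟨k, by simp⟩
  · rintro ⟨k, hk⟩
    rw [eq_sub_iff_add_eq', Matrix.toLin'_apply] at hk
    rw [← hk, cell_add_mulVec]

theorem card_range_cell (hA : A.det ≠ 0) : Nat.card (range (cell A β)) = A.det.natAbs := by
  rw [← Matrix.card_quotient_range_toLin' A hA, ← Nat.card_congr (Setoid.quotientKerEquivRange _)]
  refine Nat.card_congr (Quotient.congrRight fun m m' => ?_)
  rw [Setoid.ker_def, cell_eq_cell_iff β hA, ← Submodule.neg_mem_iff, neg_sub]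
  exact (Submodule.quotientRel_def _).symm

end Torus

/-- For an arrangement of exactly `n` toric hyperplanes on `Tⁿ` whose system of normal
vectors `Θ` has nonzero determinant, the complement `Tⁿ \ (H₁ ∪ ⋯ ∪ Hₙ)` has exactly
`|det Θ|` connected components. -/
theorem card_regions_of_n_hyperplanes {n : ℕ}
    (a : Fin n → Fin n → ℤ) (b : Fin n → AddCircle (1 : ℝ))
    (hdet : (Matrix.of a).det ≠ 0) :
    Nat.card ↥(comps (Set.univ \ ⋃ i, Hyp (a i) (b i))) = (Matrix.of a).det.natAbs := by
  obtain ⟨β, rfl⟩ := Torus.mk_surjective b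
  rw [comps_eq_range_of_isOpen_cover (S := univ \ ⋃ i, Hyp (a i) (Torus.mk β i))
    (Torus.isOpen_cell β) (Torus.isPreconnected_cell β) (Torus.cell_nonempty β hdet)
    (Torus.iUnion_cell β) fun _ _ => Torus.cell_eq_of_inter_nonempty β]
  exact Torus.card_range_cell β hdet
end

section
/- Let (A, Tⁿ) be a toric hyperplane arrangement in general position, and let x ∈ L(A) be an element of its intersection poset with j = |{i : x ⊆ Hᵢ}|. Then the closed interval [Tⁿ, x] in L(A) is order-isomorphic to the Boolean lattice of all subsets of a j-element set, ordered by inclusion. -/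
open Set

/-- An arrangement is in general position if for every subset `S` of hyperplanes with
nonempty intersection, the corresponding normal vectors are linearly independent over `ℚ`. -/
def GenPos {ι : Type*} [Fintype ι] {n : ℕ} (a : ι → Fin n → ℤ)
    (b : ι → AddCircle (1 : ℝ)) : Prop :=
  ∀ S : Finset ι, (⋂ i ∈ S, Hyp (a i) (b i)).Nonempty →
    LinearIndependent ℚ (fun i : S => fun j => (a i.1 j : ℚ))

/-- The underlying set of the intersection poset `L(A)` of an arrangement: the whole
torus `Tⁿ` together with all connected components of the nonempty intersections
`⋂_{i ∈ S} H i` over nonempty subsets `S`. The poset order is reverse inclusion. -/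
def LSet {n m : ℕ} (H : Fin m → Set (Torus n)) : Set (Set (Torus n)) :=
  {Set.univ} ∪
    {C | ∃ S : Finset (Fin m), S.Nonempty ∧
      ∃ x ∈ ⋂ i ∈ S, H i, C = connectedComponentIn (⋂ i ∈ S, H i) x}


/-!
Fix `q ∈ x` and let `I = {i | x ⊆ Hᵢ}`. Every `y ⊇ x` in `L(A)` is the component through `q`
of `⋂ {Hᵢ | y ⊆ Hᵢ}` (the whole torus being the component of the empty intersection), so
`y ↦ {i ∈ I | y ⊆ Hᵢ}` is an order embedding of the dual interval into the subsets of `I`, with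
`T ↦ (component through q of ⋂_{i ∈ T} Hᵢ)` as a left inverse. It is onto because of general
position: the normals `aᵢ`, `i ∈ I`, are independent, so for `k ∈ I \ T` some direction is
orthogonal to every `aᵢ`, `i ∈ T`, but not to `a_k`, and moving from `q` along it stays in the
component while leaving `H_k`.
-/

theorem LinearIndependent.exists_forall_dotProduct_eq {ι α F : Type*} [Finite ι] [Fintype α]
    [Field F] {f : ι → α → F} (hf : LinearIndependent F f) (w : ι → F) :
    ∃ v : α → F, ∀ i, f i ⬝ᵥ v = w i := by
  have hw : w ∈ Submodule.span F (Set.range (flip f)) := by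
    rw [span_flip_eq_top_iff_linearIndependent.mpr hf]; trivial
  obtain ⟨v, hv⟩ := (Submodule.mem_span_range_iff_exists_fun F).mp hw
  refine ⟨v, fun i => ?_⟩
  rw [← hv, dotProduct_comm]
  simp [dotProduct, flip, Finset.sum_apply]

theorem AddCircle.coe_one_half_ne_zero : ((1 / 2 : ℝ) : AddCircle (1 : ℝ)) ≠ 0 := by
  rw [← AddCircle.coe_zero, Ne, AddCircle.coe_eq_coe_iff_of_mem_Ico (a := 0)] <;> norm_num

section IntersectionComponents

variable {X ι : Type*} [TopologicalSpace X]

def intersectionComponents (H : ι → Set X) : Set (Set X) :=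
  {y | ∃ S : Set ι, ∃ p ∈ ⋂ i ∈ S, H i, y = connectedComponentIn (⋂ i ∈ S, H i) p}

theorem connectedComponentIn_eq_of_subset {F K : Set X} {p q : X} (hp : p ∈ F) (hKF : K ⊆ F)
    (hFK : connectedComponentIn F p ⊆ K) (hq : q ∈ connectedComponentIn F p) :
    connectedComponentIn K q = connectedComponentIn F p := by
  have hpK : connectedComponentIn F p ⊆ connectedComponentIn K p :=
    isPreconnected_connectedComponentIn.subset_connectedComponentIn
      (mem_connectedComponentIn hp) hFK
  rw [← connectedComponentIn_eq (hpK hq)]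
  exact (connectedComponentIn_mono p hKF).antisymm hpK

variable {H : ι → Set X}

theorem connectedComponentIn_mem_intersectionComponents {κ : Type*} (f : κ → ι) {T : Set κ}
    {p : X} (hp : p ∈ ⋂ k ∈ T, H (f k)) :
    connectedComponentIn (⋂ k ∈ T, H (f k)) p ∈ intersectionComponents H :=
  ⟨f '' T, p, by rwa [Set.biInter_image], by rw [Set.biInter_image]⟩

theorem connectedComponentIn_biInter_setOf_subset {x y : Set X} {q : X}
    (hy : y ∈ intersectionComponents H) (hxy : x ⊆ y) (hq : q ∈ x) :
    connectedComponentIn (⋂ k ∈ {k : {i // x ⊆ H i} | y ⊆ H k}, H k) q = y := by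
  obtain ⟨S, p, hp, rfl⟩ := hy
  refine connectedComponentIn_eq_of_subset hp ?_ (Set.subset_iInter₂ fun k hk => hk) (hxy hq)
  refine Set.subset_iInter₂ fun i hi => ?_
  have hyi : connectedComponentIn (⋂ i ∈ S, H i) p ⊆ H i :=
    (connectedComponentIn_subset _ _).trans (Set.biInter_subset_of_mem hi)
  exact Set.biInter_subset_of_mem (t := fun k : {i // x ⊆ H i} => H k)
    (x := ⟨i, hxy.trans hyi⟩) hyi

variable (H) {x : Set X} {q : X}

noncomputable def intervalDualOrderIsoSet (hx : IsPreconnected x) (hq : q ∈ x)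
    (hsep : ∀ (T : Set {i // x ⊆ H i}) (k : {i // x ⊆ H i}), k ∉ T →
      ¬ connectedComponentIn (⋂ i ∈ T, H i) q ⊆ H k) :
    {y // y ∈ intersectionComponents H ∧ x ⊆ y}ᵒᵈ ≃o Set {i // x ⊆ H i} :=
  have hxT (T : Set {i // x ⊆ H i}) : x ⊆ ⋂ i ∈ T, H i := Set.subset_iInter₂ fun i _ => i.2
  Equiv.toOrderIso
    { toFun := fun y => {k | (OrderDual.ofDual y).1 ⊆ H k}
      invFun := fun T => OrderDual.toDual
        ⟨connectedComponentIn (⋂ i ∈ T, H i) q,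
          connectedComponentIn_mem_intersectionComponents Subtype.val (hxT T hq),
          hx.subset_connectedComponentIn hq (hxT T)⟩
      left_inv := fun y => Subtype.ext <|
        connectedComponentIn_biInter_setOf_subset y.2.1 y.2.2 hq
      right_inv := fun T => Set.ext fun k =>
        ⟨fun hk => by_contra fun hkT => hsep T k hkT hk,
          fun hkT => (connectedComponentIn_subset _ _).trans (Set.biInter_subset_of_mem hkT)⟩ }
    (fun y₁ y₂ h _ hk => (show (OrderDual.ofDual y₂).1 ⊆ (OrderDual.ofDual y₁).1 from h).trans hk)
    (fun _ _ h => connectedComponentIn_mono q (Set.biInter_subset_biInter_left h))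

end IntersectionComponents

theorem LSet_eq_intersectionComponents {n m : ℕ} (H : Fin m → Set (Torus n)) :
    LSet H = intersectionComponents H := by
  classical
  ext y
  simp only [LSet, intersectionComponents, Set.mem_union, Set.mem_singleton_iff,
    Set.mem_ofPred_eq]
  constructor
  · rintro (rfl | ⟨S, -, p, hp, rfl⟩)
    · exact ⟨∅, 0, by simp, by simp [connectedComponentIn_univ]⟩
    · exact ⟨S, p, hp, rfl⟩
  · rintro ⟨S, p, hp, rfl⟩
    rcases S.eq_empty_or_nonempty with rfl | hS
    · left; simp [connectedComponentIn_univ]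
    · right; exact ⟨S.toFinset, by simpa using hS, p, by simpa using hp, by simp⟩

@[simp]
theorem mem_Hyp {n : ℕ} {a : Fin n → ℤ} {c : AddCircle (1 : ℝ)} {x : Torus n} :
    x ∈ Hyp a c ↔ theta a x = c :=
  Iff.rfl

theorem theta_add {n : ℕ} (a : Fin n → ℤ) (x y : Torus n) :
    theta a (x + y) = theta a x + theta a y := by
  simp [theta, smul_add, Finset.sum_add_distrib]

theorem theta_coe {n : ℕ} (a : Fin n → ℤ) (w : Fin n → ℝ) :
    theta a (fun j => (w j : AddCircle (1 : ℝ))) =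
      (((Int.cast ∘ a) ⬝ᵥ w : ℝ) : AddCircle (1 : ℝ)) := by
  simp_rw [theta, ← AddCircle.coe_zsmul, zsmul_eq_mul]
  exact (map_sum (QuotientAddGroup.mk' (AddSubgroup.zmultiples (1 : ℝ))) _ _).symm

theorem GenPos.linearIndependent {ι : Type*} [Fintype ι] {n : ℕ} {a : ι → Fin n → ℤ}
    {b : ι → AddCircle (1 : ℝ)} (h : GenPos a b) {s : Set ι} {q : Torus n}
    (hq : ∀ i ∈ s, q ∈ Hyp (a i) (b i)) :
    LinearIndependent ℚ fun (i : s) j => (a i j : ℚ) := by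
  classical
  refine (h s.toFinset ⟨q, by simpa using hq⟩).comp (fun i : s => ⟨i, by simp⟩) ?_
  exact fun i j hij => by simpa [Subtype.ext_iff] using hij

/-- The witness is `q + v` with `aₖ ⬝ v = 0` for `k ∈ T` and `aₖ₀ ⬝ v = 1/2`: the line `q + ℝv`
stays in `⋂ k ∈ T, Hₖ`. -/
theorem not_connectedComponentIn_subset_hyp {n : ℕ} {κ : Type*} [Finite κ]
    {a : κ → Fin n → ℤ} {b : κ → AddCircle (1 : ℝ)}
    (hli : LinearIndependent ℚ fun k j => (a k j : ℚ)) {q : Torus n}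
    (hq : ∀ k, q ∈ Hyp (a k) (b k)) {T : Set κ} {k₀ : κ} (hk₀ : k₀ ∉ T) :
    ¬ connectedComponentIn (⋂ k ∈ T, Hyp (a k) (b k)) q ⊆ Hyp (a k₀) (b k₀) := by
  classical
  obtain ⟨v, hv⟩ := hli.exists_forall_dotProduct_eq fun k => if k = k₀ then (1 / 2 : ℚ) else 0
  let w : Fin n → ℝ := fun j => v j
  let γ : ℝ → Torus n := fun t => q + fun j => ((t • w) j : AddCircle (1 : ℝ))
  have hθγ (k : κ) (t : ℝ) : theta (a k) (γ t) =
      b k + ((t * ((if k = k₀ then 1 / 2 else 0 : ℚ) : ℝ) : ℝ) : AddCircle (1 : ℝ)) := by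
    rw [theta_add, theta_coe, hq k, dotProduct_smul, smul_eq_mul, ← hv k, ← Rat.coe_castHom,
      RingHom.map_dotProduct]
    rfl
  have hγT : Set.range γ ⊆ ⋂ k ∈ T, Hyp (a k) (b k) := by
    rintro _ ⟨t, rfl⟩
    simp only [Set.mem_iInter, mem_Hyp]
    intro k hk
    simp [hθγ, ne_of_mem_of_not_mem hk hk₀]
  have hγ1 : γ 1 ∈ connectedComponentIn (⋂ k ∈ T, Hyp (a k) (b k)) q :=
    (isPreconnected_range (by fun_prop)).subset_connectedComponentIn ⟨0, by ext; simp [γ]⟩ hγT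
      ⟨1, rfl⟩
  intro hsub
  have hγ1k₀ := hsub hγ1
  rw [mem_Hyp, hθγ, if_pos rfl, one_mul, add_eq_left] at hγ1k₀
  push_cast at hγ1k₀
  exact AddCircle.coe_one_half_ne_zero hγ1k₀

theorem interval_orderIso_boolean_general {n m : ℕ}
    (a : Fin m → Fin n → ℤ) (b : Fin m → AddCircle (1 : ℝ))
    (hgp : GenPos a b)
    (x : Set (Torus n)) (hx : x ∈ LSet (fun i => Hyp (a i) (b i)))
    (j : ℕ) (hj : j = Nat.card {i : Fin m // x ⊆ Hyp (a i) (b i)}) :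
    Nonempty
      (({y : Set (Torus n) // y ∈ LSet (fun i => Hyp (a i) (b i)) ∧ x ⊆ y})ᵒᵈ ≃o
        Set (Fin j)) := by
  rw [LSet_eq_intersectionComponents] at hx ⊢
  obtain ⟨S, q, hqS, rfl⟩ := hx
  have hq := mem_connectedComponentIn hqS
  have hli := hgp.linearIndependent (s := {i | connectedComponentIn _ q ⊆ Hyp (a i) (b i)})
    fun i hi => hi hq
  have hsep (T) (k) (hk : k ∉ T) := not_connectedComponentIn_subset_hyp hli (fun k => k.2 hq) hk
  exact ⟨(intervalDualOrderIsoSet _ isPreconnected_connectedComponentIn hq hsep).trans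
    (Finite.equivFinOfCardEq hj.symm).toOrderIsoSet⟩

/-- For a toric hyperplane arrangement in general position and an element `x` of its
intersection poset `L(A)` with `j = |{i : x ⊆ Hᵢ}|`, the closed interval `[Tⁿ, x]` in
`L(A)` (ordered by reverse inclusion) is order-isomorphic to the Boolean lattice of all
subsets of a `j`-element set. -/
theorem interval_orderIso_boolean {n m : ℕ}
    (a : Fin m → Fin n → ℤ) (b : Fin m → AddCircle (1 : ℝ))
    (ha : ∀ i, a i ≠ 0) (hgp : GenPos a b)
    (x : Set (Torus n)) (hx : x ∈ LSet (fun i => Hyp (a i) (b i)))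
    (j : ℕ) (hj : j = Nat.card {i : Fin m // x ⊆ Hyp (a i) (b i)}) :
    Nonempty
      (({y : Set (Torus n) // y ∈ LSet (fun i => Hyp (a i) (b i)) ∧ x ⊆ y})ᵒᵈ ≃o
        Set (Fin j)) :=
  interval_orderIso_boolean_general a b hgp x hx j hj
end
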